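/- Fix ε ∈ (0, 1/α) and δ ∈ (0, ε). There exist γ > 0 and T > 0 such that for all t ≥ T and every Borel probability measure μ on ℝ^d with support contained in the closed ball of radius t^{1/α−ε} centered at the origin, ∫_{|y| ≤ t^{1/α−δ}} exp( −t ∫ v̂(z−y) μ(dz) ) dy ≤ exp(−t^γ). (The region of points at sub-critical distance from the support of μ contributes a negligible amount to the Laplace-functional integral.) -/

import Mathlib

open MeasureTheory

/-- The shape function `v̂(x) = min(|x|^{−α}, 1)`. -/
noncomputable def vhat (d : ℕ) (α : ℝ) (x : EuclideanSpace ℝ (Fin d)) : ℝ :=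
  min (‖x‖ ^ (-α)) 1

/-!
For `|y| ≤ R = t^{1/α-δ}` the measure `μ` lives within distance `2R` of `y`, so the potential
`∫ v̂(z - y) μ(dz)` is at least `(2R)^{-α} = 2^{-α} t^{αδ-1}` (off the countably many atoms of `μ`,
a Lebesgue-null set). The integrand is therefore at most `exp(-2^{-α} t^{αδ})`, while the ball
has volume of order `t^{d(1/α-δ)}`; for large `t` the product is below `exp(-t^{αδ/2})`.
-/

open Filter Metric Real Topology

lemma ae_measure_singleton_eq_zero {X : Type*} [MeasurableSpace X] [MeasurableSingletonClass X]
    (μ ν : Measure X) [SFinite μ] [NullSingletonClass ν] : ∀ᵐ y ∂ν, μ {y} = 0 :=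
  ae_iff.2 <| measure_mono_null (fun _ hy ↦ pos_iff_ne_zero.2 hy)
    ((Measure.countable_meas_level_set_pos (μ := μ) measurable_id).measure_zero ν)

section vhat

variable {d : ℕ} {α : ℝ}

lemma measurable_vhat : Measurable (vhat d α) := by
  unfold vhat; fun_prop

lemma vhat_nonneg (x : EuclideanSpace ℝ (Fin d)) : 0 ≤ vhat d α x :=
  le_min (rpow_nonneg (norm_nonneg x) _) zero_le_one

lemma vhat_le_one (x : EuclideanSpace ℝ (Fin d)) : vhat d α x ≤ 1 :=
  min_le_right _ _

lemma min_rpow_neg_le_vhat (hα : 0 ≤ α) {x : EuclideanSpace ℝ (Fin d)} {ρ : ℝ}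
    (hx : 0 < ‖x‖) (hxρ : ‖x‖ ≤ ρ) : min (ρ ^ (-α)) 1 ≤ vhat d α x :=
  min_le_min_right 1 (rpow_le_rpow_of_nonpos hx hxρ (neg_nonpos.2 hα))

lemma integrable_vhat_sub (μ : Measure (EuclideanSpace ℝ (Fin d))) [IsFiniteMeasure μ]
    (y : EuclideanSpace ℝ (Fin d)) : Integrable (fun z ↦ vhat d α (z - y)) μ :=
  Integrable.of_bound (measurable_vhat.comp (measurable_sub_const y)).aestronglyMeasurable 1
    (ae_of_all _ fun z ↦ by rw [norm_of_nonneg (vhat_nonneg _)]; exact vhat_le_one _)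

/-- Lean's `0 ^ (-α) = 0` makes `vhat d α 0 = 0`, which is why `y` must not be an atom of `μ`. -/
lemma min_rpow_neg_le_integral_vhat_sub (hα : 0 ≤ α) (μ : Measure (EuclideanSpace ℝ (Fin d)))
    [IsProbabilityMeasure μ] {y : EuclideanSpace ℝ (Fin d)} {ρ : ℝ} (hy : μ {y} = 0)
    (hρ : ∀ᵐ z ∂μ, ‖z - y‖ ≤ ρ) : min (ρ ^ (-α)) 1 ≤ ∫ z, vhat d α (z - y) ∂μ := by
  have hne : ∀ᵐ z ∂μ, z ≠ y := measure_eq_zero_iff_ae_notMem.1 hy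
  calc min (ρ ^ (-α)) 1 = ∫ _, min (ρ ^ (-α)) 1 ∂μ := by simp
    _ ≤ ∫ z, vhat d α (z - y) ∂μ := by
      refine integral_mono_ae (integrable_const _) (integrable_vhat_sub μ y) ?_
      filter_upwards [hne, hρ] with z hz hzρ
      exact min_rpow_neg_le_vhat hα (norm_pos_iff.2 (sub_ne_zero.2 hz)) hzρ

lemma setIntegral_exp_neg_mul_integral_vhat_le (hα : 0 ≤ α) {t : ℝ} (ht : 0 ≤ t)
    (μ : Measure (EuclideanSpace ℝ (Fin d))) [IsProbabilityMeasure μ]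
    (ν : Measure (EuclideanSpace ℝ (Fin d))) [NullSingletonClass ν]
    {s : Set (EuclideanSpace ℝ (Fin d))} (hs : ν s < ⊤) {ρ : ℝ}
    (hρ : ∀ y ∈ s, ∀ᵐ z ∂μ, ‖z - y‖ ≤ ρ) :
    ∫ y in s, exp (-t * ∫ z, vhat d α (z - y) ∂μ) ∂ν ≤
      exp (-t * min (ρ ^ (-α)) 1) * ν.real s := by
  have hbound : ∀ᵐ y ∂ν, y ∈ s →
      ‖exp (-t * ∫ z, vhat d α (z - y) ∂μ)‖ ≤ exp (-t * min (ρ ^ (-α)) 1) := by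
    filter_upwards [ae_measure_singleton_eq_zero μ ν] with y hy hys
    rw [norm_of_nonneg (exp_nonneg _), exp_le_exp, neg_mul, neg_mul, neg_le_neg_iff]
    exact mul_le_mul_of_nonneg_left (min_rpow_neg_le_integral_vhat_sub hα μ hy (hρ y hys)) ht
  exact (le_abs_self _).trans (norm_setIntegral_le_of_norm_le_const_ae' hs hbound)

lemma setIntegral_closedBall_exp_neg_mul_integral_vhat_le [Nonempty (Fin d)] (hα : 0 ≤ α)
    {t r R : ℝ} (ht : 0 ≤ t) (hR : 0 ≤ R) (hrR : r ≤ R) (μ : Measure (EuclideanSpace ℝ (Fin d)))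
    [IsProbabilityMeasure μ] (hsupp : μ (closedBall 0 r)ᶜ = 0) :
    ∫ y in closedBall (0 : EuclideanSpace ℝ (Fin d)) R, exp (-t * ∫ z, vhat d α (z - y) ∂μ) ≤
      exp (-t * min ((2 * R) ^ (-α)) 1) *
        (R ^ d * volume.real (ball (0 : EuclideanSpace ℝ (Fin d)) 1)) := by
  have hdist : ∀ y ∈ closedBall (0 : EuclideanSpace ℝ (Fin d)) R,
      ∀ᵐ z ∂μ, ‖z - y‖ ≤ 2 * R := by
    intro y hy
    filter_upwards [mem_ae_iff.2 hsupp] with z hz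
    rw [mem_closedBall_zero_iff] at hy hz
    linarith [norm_sub_le z y]
  calc _ ≤ exp (-t * min ((2 * R) ^ (-α)) 1) *
          volume.real (closedBall (0 : EuclideanSpace ℝ (Fin d)) R) :=
        setIntegral_exp_neg_mul_integral_vhat_le hα ht μ volume measure_closedBall_lt_top hdist
    _ = _ := by rw [Measure.addHaar_real_closedBall _ _ hR, finrank_euclideanSpace_fin]

end vhat

lemma eventually_mul_rpow_mul_exp_neg_mul_sq_le {C : ℝ} (hC : 0 ≤ C) (s : ℝ) {a : ℝ}
    (ha : 0 < a) : ∀ᶠ u in atTop, C * u ^ s * exp (-(a * u ^ 2)) ≤ exp (-u) := by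
  have hlim : Tendsto (fun u ↦ C * (u ^ s * exp (-1 * u))) atTop (𝓝 0) := by
    simpa using (tendsto_rpow_mul_exp_neg_mul_atTop_nhds_zero s 1 one_pos).const_mul C
  filter_upwards [hlim.eventually (gt_mem_nhds one_pos), eventually_ge_atTop (2 / a)]
    with u hsmall hu
  have hu0 : 0 < u := (div_pos two_pos ha).trans_le hu
  have hsq : 2 * u ≤ a * u ^ 2 := by
    rw [div_le_iff₀ ha] at hu; nlinarith
  calc C * u ^ s * exp (-(a * u ^ 2)) ≤ C * u ^ s * exp (-u + -u) := by gcongr; linarith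
    _ = C * (u ^ s * exp (-1 * u)) * exp (-u) := by rw [exp_add]; ring_nf
    _ ≤ 1 * exp (-u) := by gcongr
    _ = exp (-u) := one_mul _

lemma eventually_mul_rpow_mul_exp_neg_mul_rpow_le {C : ℝ} (hC : 0 ≤ C) (s : ℝ) {a κ : ℝ}
    (ha : 0 < a) (hκ : 0 < κ) :
    ∀ᶠ t in atTop, C * t ^ s * exp (-(a * t ^ κ)) ≤ exp (-t ^ (κ / 2)) := by
  filter_upwards [(tendsto_rpow_atTop (half_pos hκ)).eventually
      (eventually_mul_rpow_mul_exp_neg_mul_sq_le hC (2 * s / κ) ha), eventually_gt_atTop 0]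
    with t h ht
  have hs : (t ^ (κ / 2)) ^ (2 * s / κ) = t ^ s := by
    rw [← rpow_mul ht.le]; congr 1; field_simp
  have hκ : (t ^ (κ / 2)) ^ 2 = t ^ κ := by
    rw [← rpow_mul_natCast ht.le]; congr 1; ring
  rwa [hs, hκ] at h

theorem stmt_8_general (d : ℕ) (hd : 1 ≤ d) (α : ℝ) (hα₁ : (d : ℝ) < α)
    (ε δ : ℝ) (hε : ε ∈ Set.Ioo 0 (1 / α))
    (hδ : δ ∈ Set.Ioo 0 ε) :
    ∃ γ : ℝ, 0 < γ ∧ ∃ T : ℝ, 0 < T ∧ ∀ t : ℝ, T ≤ t →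
      ∀ μ : Measure (EuclideanSpace ℝ (Fin d)), IsProbabilityMeasure μ →
        μ (Metric.closedBall (0 : EuclideanSpace ℝ (Fin d)) (t ^ (1 / α - ε)))ᶜ = 0 →
        (∫ y in Metric.closedBall (0 : EuclideanSpace ℝ (Fin d)) (t ^ (1 / α - δ)),
            Real.exp (-t * ∫ z, vhat d α (z - y) ∂μ))
          ≤ Real.exp (-t ^ γ) := by
  have hα : 0 < α := (Nat.cast_nonneg d).trans_lt hα₁
  have hp : 0 < 1 / α - δ := by linarith [hδ.2, hε.2]
  -- makes `volume` atomless
  have : Nonempty (Fin d) := ⟨⟨0, hd⟩⟩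
  set c₁ := volume.real (ball (0 : EuclideanSpace ℝ (Fin d)) 1)
  obtain ⟨T, hT⟩ := eventually_atTop.1 <| (eventually_ge_atTop 1).and <|
    eventually_mul_rpow_mul_exp_neg_mul_rpow_le (C := c₁) measureReal_nonneg ((1 / α - δ) * d)
      (rpow_pos_of_pos two_pos (-α)) (mul_pos hα hδ.1)
  refine ⟨α * δ / 2, by have := hδ.1; positivity, max T 1, by positivity,
    fun t ht μ _ hsupp ↦ ?_⟩
  obtain ⟨ht1, hdecay⟩ := hT t (le_of_max_le_left ht)
  have ht0 : 0 < t := one_pos.trans_le ht1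
  set R := t ^ (1 / α - δ)
  have hR1 : 1 ≤ R := one_le_rpow ht1 hp.le
  have hrate : t * (2 * R) ^ (-α) = 2 ^ (-α) * t ^ (α * δ) := by
    have hexp : 1 + (1 / α - δ) * -α = α * δ := by field_simp; ring
    rw [mul_rpow two_pos.le (rpow_nonneg ht0.le _), ← rpow_mul ht0.le, ← hexp, rpow_add ht0,
      rpow_one]
    ring
  calc _ ≤ exp (-t * min ((2 * R) ^ (-α)) 1) * (R ^ d * c₁) :=
        setIntegral_closedBall_exp_neg_mul_integral_vhat_le hα.le ht0.le (by positivity)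
          (rpow_le_rpow_of_exponent_le ht1 (by linarith [hδ.2])) μ hsupp
    _ = c₁ * t ^ ((1 / α - δ) * d) * exp (-(2 ^ (-α) * t ^ (α * δ))) := by
        rw [min_eq_left (rpow_le_one_of_one_le_of_nonpos (by linarith) (by linarith)), neg_mul,
          hrate, ← rpow_natCast, ← rpow_mul ht0.le]
        ring
    _ ≤ exp (-t ^ (α * δ / 2)) := hdecay

/-- for `0 < δ < ε < 1/α` there are `γ, T > 0` such that for
`t ≥ T` and every probability measure `μ` supported in the closed ball of
radius `t^{1/α−ε}`,
`∫_{|y| ≤ t^{1/α−δ}} exp(−t ∫ v̂(z−y) μ(dz)) dy ≤ exp(−t^γ)`. -/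
theorem stmt_8 (d : ℕ) (hd : 1 ≤ d) (α : ℝ) (hα₁ : (d : ℝ) < α)
    (hα₂ : α < d + 2) (ε δ : ℝ) (hε : ε ∈ Set.Ioo 0 (1 / α))
    (hδ : δ ∈ Set.Ioo 0 ε) :
    ∃ γ : ℝ, 0 < γ ∧ ∃ T : ℝ, 0 < T ∧ ∀ t : ℝ, T ≤ t →
      ∀ μ : Measure (EuclideanSpace ℝ (Fin d)), IsProbabilityMeasure μ →
        μ (Metric.closedBall (0 : EuclideanSpace ℝ (Fin d)) (t ^ (1 / α - ε)))ᶜ = 0 →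
        (∫ y in Metric.closedBall (0 : EuclideanSpace ℝ (Fin d)) (t ^ (1 / α - δ)),
            Real.exp (-t * ∫ z, vhat d α (z - y) ∂μ))
          ≤ Real.exp (-t ^ γ) :=
  stmt_8_general d hd α hα₁ ε δ hε hδ
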